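/- arXiv:1211.2725 — 4 statements merged into one kernel-verified Lean document; each statement's English description precedes it below -/
import Mathlib

section
/- The barycenter (with respect to 2-dimensional Lebesgue measure) of the polytope P₁ equals (1/12, 1/12); that is, the vector-valued integral ∫_{P₁} x dx equals (1/12, 1/12) times the Lebesgue measure of P₁. -/
open MeasureTheory Set

/-- The region cut out by the four halfplane inequalities. -/
def Sreg : Set (ℝ × ℝ) := {p | -1 ≤ p.1 ∧ -1 ≤ p.2 ∧ -1 ≤ p.1 + p.2 ∧ p.1 + p.2 ≤ 1}

lemma mem_Sreg {p : ℝ × ℝ} :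
    p ∈ Sreg ↔ -1 ≤ p.1 ∧ -1 ≤ p.2 ∧ -1 ≤ p.1 + p.2 ∧ p.1 + p.2 ≤ 1 := Iff.rfl

lemma Sreg_meas : MeasurableSet Sreg := by
  unfold Sreg
  apply MeasurableSet.inter
  · exact measurableSet_le measurable_const measurable_fst
  apply MeasurableSet.inter
  · exact measurableSet_le measurable_const measurable_snd
  apply MeasurableSet.inter
  · exact measurableSet_le measurable_const (measurable_fst.add measurable_snd)
  · exact measurableSet_le (measurable_fst.add measurable_snd) measurable_const

lemma hull_eq :
    convexHull ℝ {((0 : ℝ), (-1 : ℝ)), (-1, 0), (-1, 2), (2, -1)} = Sreg := by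
  apply Subset.antisymm
  · apply convexHull_min
    · intro p hp
      simp only [mem_insert_iff, mem_singleton_iff] at hp
      rcases hp with h | h | h | h <;> subst h <;>
        refine ⟨by norm_num, by norm_num, by norm_num, by norm_num⟩
    · intro p hp q hq a b ha hb hab
      obtain ⟨h1, h2, h3, h4⟩ := hp
      obtain ⟨k1, k2, k3, k4⟩ := hq
      refine ⟨?_, ?_, ?_, ?_⟩ <;>
        simp only [Prod.fst_add, Prod.snd_add, Prod.smul_fst, Prod.smul_snd,
          smul_eq_mul] <;> nlinarith
  · intro p hp
    obtain ⟨h1, h2, h3, h4⟩ := hp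
    have hd : (0 : ℝ) < p.1 + p.2 + 2 := by linarith
    set t : ℝ := (p.1 + p.2 + 1) / 2 with ht
    set s : ℝ := (p.1 + 1) / (p.1 + p.2 + 2) with hs
    have ht0 : 0 ≤ t := by
      apply div_nonneg <;> linarith
    have ht1 : t ≤ 1 := by
      rw [ht, div_le_one (by norm_num : (0:ℝ) < 2)]; linarith
    have hs0 : 0 ≤ s := div_nonneg (by linarith) hd.le
    have hs1 : s ≤ 1 := by
      rw [hs, div_le_one hd]; linarith
    have h2t : 2 * t = p.1 + p.2 + 1 := by
      rw [ht]; ring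
    have hsd : s * (p.1 + p.2 + 2) = p.1 + 1 := by
      rw [hs]; field_simp
    have hB : ((-1 : ℝ), (0 : ℝ)) ∈
        ({((0 : ℝ), (-1 : ℝ)), (-1, 0), (-1, 2), (2, -1)} : Set (ℝ × ℝ)) := by simp
    have hC : ((-1 : ℝ), (2 : ℝ)) ∈
        ({((0 : ℝ), (-1 : ℝ)), (-1, 0), (-1, 2), (2, -1)} : Set (ℝ × ℝ)) := by simp
    have hA : ((0 : ℝ), (-1 : ℝ)) ∈
        ({((0 : ℝ), (-1 : ℝ)), (-1, 0), (-1, 2), (2, -1)} : Set (ℝ × ℝ)) := by simp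
    have hD : ((2 : ℝ), (-1 : ℝ)) ∈
        ({((0 : ℝ), (-1 : ℝ)), (-1, 0), (-1, 2), (2, -1)} : Set (ℝ × ℝ)) := by simp
    have hL : ((-1 : ℝ), 2 * t) ∈
        convexHull ℝ ({((0 : ℝ), (-1 : ℝ)), (-1, 0), (-1, 2), (2, -1)} : Set (ℝ × ℝ)) := by
      apply segment_subset_convexHull hB hC
      exact ⟨1 - t, t, by linarith, ht0, by ring, by
        simp only [Prod.smul_mk, Prod.mk_add_mk, smul_eq_mul, Prod.mk.injEq]
        constructor <;> ring⟩
    have hR : ((2 * t : ℝ), (-1 : ℝ)) ∈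
        convexHull ℝ ({((0 : ℝ), (-1 : ℝ)), (-1, 0), (-1, 2), (2, -1)} : Set (ℝ × ℝ)) := by
      apply segment_subset_convexHull hA hD
      exact ⟨1 - t, t, by linarith, ht0, by ring, by
        simp only [Prod.smul_mk, Prod.mk_add_mk, smul_eq_mul, Prod.mk.injEq]
        constructor <;> ring⟩
    apply (convex_convexHull ℝ _).segment_subset hL hR
    refine ⟨1 - s, s, by linarith, hs0, by ring, ?_⟩
    simp only [Prod.smul_mk, Prod.mk_add_mk, smul_eq_mul]
    have : p = (p.1, p.2) := rfl
    rw [this, Prod.mk.injEq]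
    constructor <;> nlinarith [hsd, h2t]

lemma Sreg_compact : IsCompact Sreg := by
  rw [← hull_eq]
  exact (Set.toFinite _).isCompact_convexHull ℝ

lemma slice_lt {x : ℝ} (hx : x < -1) : Prod.mk x ⁻¹' Sreg = ∅ := by
  ext y
  simp only [mem_preimage, mem_Sreg, mem_empty_iff_false, iff_false, not_and]
  intro h; linarith

lemma slice_neg {x : ℝ} (hx1 : -1 ≤ x) (hx2 : x ≤ 0) :
    Prod.mk x ⁻¹' Sreg = Icc (-1 - x) (1 - x) := by
  ext y
  simp only [mem_preimage, mem_Sreg, mem_Icc]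
  constructor
  · rintro ⟨a, b, c, d⟩; constructor <;> linarith
  · rintro ⟨a, b⟩; exact ⟨by linarith, by linarith, by linarith, by linarith⟩

lemma slice_pos {x : ℝ} (hx : 0 ≤ x) :
    Prod.mk x ⁻¹' Sreg = Icc (-1) (1 - x) := by
  ext y
  simp only [mem_preimage, mem_Sreg, mem_Icc]
  constructor
  · rintro ⟨a, b, c, d⟩; constructor <;> linarith
  · rintro ⟨a, b⟩; exact ⟨by linarith, by linarith, by linarith, by linarith⟩

lemma slice_meas (x : ℝ) : MeasurableSet (Prod.mk x ⁻¹' Sreg) :=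
  Sreg_meas.preimage measurable_prodMk_left

lemma integrableOn_Sreg {f : ℝ × ℝ → ℝ} (hf : Continuous f) :
    Integrable (Sreg.indicator f) volume := by
  rw [integrable_indicator_iff Sreg_meas]
  exact hf.continuousOn.integrableOn_compact Sreg_compact

lemma int_fst : (∫ p in Sreg, p.1 ∂volume) = 1 / 3 := by
  have hint := integrableOn_Sreg continuous_fst
  rw [← integral_indicator Sreg_meas]
  rw [Measure.volume_eq_prod] at hint ⊢
  rw [integral_prod _ hint]
  have inner : ∀ x : ℝ, (∫ y : ℝ, Sreg.indicator (fun p => p.1) (x, y)) =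
      (Icc (-1 : ℝ) 0).indicator (fun x => 2 * x) x
        + (Ioc (0 : ℝ) 2).indicator (fun x => (2 - x) * x) x := by
    intro x
    have heq : (fun y => Sreg.indicator (fun p => p.1) (x, y)) =
        (Prod.mk x ⁻¹' Sreg).indicator (fun _ => x) := by
      ext y
      rfl
    rw [heq, integral_indicator_const _ (slice_meas x)]
    rcases lt_or_ge x (-1) with h | h
    · rw [slice_lt h]
      rw [Set.indicator_of_notMem (by simp [mem_Icc]; intro; linarith),
        Set.indicator_of_notMem (by simp [mem_Ioc]; intro; linarith)]
      simp
    · rcases le_or_gt x 0 with h0 | h0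
      · rw [slice_neg h h0, measureReal_def, Real.volume_Icc,
          Set.indicator_of_mem (by simp [mem_Icc]; exact ⟨h, h0⟩),
          Set.indicator_of_notMem (by simp [mem_Ioc]; intro; linarith)]
        rw [show (1 - x - (-1 - x) : ℝ) = 2 by ring, ENNReal.toReal_ofReal (by norm_num)]
        simp [smul_eq_mul]
      · rw [slice_pos h0.le, measureReal_def, Real.volume_Icc]
        rcases le_or_gt x 2 with h2 | h2
        · rw [Set.indicator_of_notMem (by simp [mem_Icc]; intro; linarith),
            Set.indicator_of_mem (by simp [mem_Ioc]; exact ⟨h0, h2⟩)]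
          rw [show (1 - x - (-1) : ℝ) = 2 - x by ring,
            ENNReal.toReal_ofReal (by linarith)]
          simp [smul_eq_mul]
        · rw [Set.indicator_of_notMem (by simp [mem_Icc]; intro; linarith),
            Set.indicator_of_notMem (by simp [mem_Ioc]; intro; linarith)]
          rw [show ENNReal.ofReal (1 - x - (-1)) = 0 by
            rw [ENNReal.ofReal_eq_zero]; linarith]
          simp
  simp only [inner]
  have hi1 : Integrable ((Icc (-1 : ℝ) 0).indicator (fun x => 2 * x)) volume := by
    rw [integrable_indicator_iff measurableSet_Icc]
    exact (continuous_const.mul continuous_id).continuousOn.integrableOn_compact isCompact_Icc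
  have hi2 : Integrable ((Ioc (0 : ℝ) 2).indicator (fun x => (2 - x) * x)) volume := by
    rw [integrable_indicator_iff measurableSet_Ioc]
    exact (((continuous_const.sub continuous_id).mul continuous_id).continuousOn.integrableOn_compact
      (isCompact_Icc (a := (0:ℝ)) (b := 2))).mono_set Ioc_subset_Icc_self
  rw [integral_add hi1 hi2, integral_indicator measurableSet_Icc,
    integral_indicator measurableSet_Ioc, integral_Icc_eq_integral_Ioc,
    ← intervalIntegral.integral_of_le (by norm_num : (-1 : ℝ) ≤ 0),
    ← intervalIntegral.integral_of_le (by norm_num : (0 : ℝ) ≤ 2)]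
  have e1 : (∫ x in (-1 : ℝ)..0, 2 * x) = -1 := by
    have hd : ∀ x ∈ uIcc (-1 : ℝ) 0, HasDerivAt (fun x : ℝ => x ^ 2) (2 * x) x :=
      fun x _ => by simpa using hasDerivAt_pow 2 x
    have hi : IntervalIntegrable (fun x : ℝ => 2 * x) volume (-1) 0 := by
      apply Continuous.intervalIntegrable; continuity
    rw [intervalIntegral.integral_eq_sub_of_hasDerivAt hd hi]
    norm_num
  have e2 : (∫ x in (0 : ℝ)..2, (2 - x) * x) = 4 / 3 := by
    have hd : ∀ x ∈ uIcc (0 : ℝ) 2,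
        HasDerivAt (fun x : ℝ => x ^ 2 - x ^ 3 / 3) ((2 - x) * x) x := by
      intro x _
      have h := (hasDerivAt_pow 2 x).sub ((hasDerivAt_pow 3 x).div_const 3)
      exact h.congr_deriv (by norm_num; ring)
    have hi : IntervalIntegrable (fun x : ℝ => (2 - x) * x) volume 0 2 := by
      apply Continuous.intervalIntegrable; continuity
    rw [intervalIntegral.integral_eq_sub_of_hasDerivAt hd hi]
    norm_num
  rw [e1, e2]; norm_num

lemma int_one : (∫ _p in Sreg, (1 : ℝ) ∂volume) = 4 := by
  have hint := integrableOn_Sreg continuous_const (f := fun _ => (1 : ℝ))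
  rw [← integral_indicator Sreg_meas]
  rw [Measure.volume_eq_prod] at hint ⊢
  rw [integral_prod _ hint]
  have inner : ∀ x : ℝ, (∫ y : ℝ, Sreg.indicator (fun _ : ℝ × ℝ => (1:ℝ)) (x, y)) =
      (Icc (-1 : ℝ) 0).indicator (fun _ => 2) x
        + (Ioc (0 : ℝ) 2).indicator (fun x => 2 - x) x := by
    intro x
    have heq : (fun y => Sreg.indicator (fun _ => (1:ℝ)) (x, y)) =
        (Prod.mk x ⁻¹' Sreg).indicator (fun _ => (1:ℝ)) := by
      ext y
      rfl
    rw [heq, integral_indicator_const _ (slice_meas x)]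
    rcases lt_or_ge x (-1) with h | h
    · rw [slice_lt h]
      rw [Set.indicator_of_notMem (by simp [mem_Icc]; intro; linarith),
        Set.indicator_of_notMem (by simp [mem_Ioc]; intro; linarith)]
      simp
    · rcases le_or_gt x 0 with h0 | h0
      · rw [slice_neg h h0, measureReal_def, Real.volume_Icc,
          Set.indicator_of_mem (by simp [mem_Icc]; exact ⟨h, h0⟩),
          Set.indicator_of_notMem (by simp [mem_Ioc]; intro; linarith)]
        rw [show (1 - x - (-1 - x) : ℝ) = 2 by ring, ENNReal.toReal_ofReal (by norm_num)]
        simp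
      · rcases le_or_gt x 2 with h2 | h2
        · rw [slice_pos h0.le, measureReal_def, Real.volume_Icc,
            Set.indicator_of_notMem (by simp [mem_Icc]; intro; linarith),
            Set.indicator_of_mem (by simp [mem_Ioc]; exact ⟨h0, h2⟩)]
          rw [show (1 - x - (-1) : ℝ) = 2 - x by ring,
            ENNReal.toReal_ofReal (by linarith)]
          simp
        · rw [slice_pos h0.le, measureReal_def, Real.volume_Icc,
            Set.indicator_of_notMem (by simp [mem_Icc]; intro; linarith),
            Set.indicator_of_notMem (by simp [mem_Ioc]; intro; linarith)]
          rw [show ENNReal.ofReal (1 - x - (-1)) = 0 by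
            rw [ENNReal.ofReal_eq_zero]; linarith]
          simp
  simp only [inner]
  have hi1 : Integrable ((Icc (-1 : ℝ) 0).indicator (fun _ => (2:ℝ))) volume := by
    rw [integrable_indicator_iff measurableSet_Icc]
    exact continuous_const.continuousOn.integrableOn_compact isCompact_Icc
  have hi2 : Integrable ((Ioc (0 : ℝ) 2).indicator (fun x => 2 - x)) volume := by
    rw [integrable_indicator_iff measurableSet_Ioc]
    exact ((continuous_const.sub continuous_id).continuousOn.integrableOn_compact
      (isCompact_Icc (a := (0:ℝ)) (b := 2))).mono_set Ioc_subset_Icc_self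
  rw [integral_add hi1 hi2, integral_indicator measurableSet_Icc,
    integral_indicator measurableSet_Ioc, integral_Icc_eq_integral_Ioc,
    ← intervalIntegral.integral_of_le (by norm_num : (-1 : ℝ) ≤ 0),
    ← intervalIntegral.integral_of_le (by norm_num : (0 : ℝ) ≤ 2)]
  have e1 : (∫ _x in (-1 : ℝ)..0, (2:ℝ)) = 2 := by simp
  have e2 : (∫ x in (0 : ℝ)..2, (2 - x)) = 2 := by
    have hd : ∀ x ∈ uIcc (0 : ℝ) 2,
        HasDerivAt (fun x : ℝ => 2 * x - x ^ 2 / 2) (2 - x) x := by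
      intro x _
      have h := ((hasDerivAt_id x).const_mul 2).sub ((hasDerivAt_pow 2 x).div_const 2)
      exact h.congr_deriv (by norm_num)
    have hi : IntervalIntegrable (fun x : ℝ => 2 - x) volume 0 2 := by
      apply Continuous.intervalIntegrable; continuity
    rw [intervalIntegral.integral_eq_sub_of_hasDerivAt hd hi]
    norm_num
  rw [e1, e2]; norm_num

lemma vol_toReal : (volume Sreg).toReal = 4 := by
  have h := int_one
  rw [setIntegral_const] at h
  simpa [measureReal_def] using h

lemma swap_Sreg : Prod.swap ⁻¹' Sreg = Sreg := by
  ext p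
  simp only [mem_preimage, Prod.fst_swap, Prod.snd_swap, mem_Sreg]
  constructor <;> rintro ⟨a, b, c, d⟩ <;> exact ⟨b, a, by linarith, by linarith⟩

lemma int_snd : (∫ p in Sreg, p.2 ∂volume) = 1 / 3 := by
  have hswap : MeasurePreserving (Prod.swap : ℝ × ℝ → ℝ × ℝ) volume volume := by
    rw [Measure.volume_eq_prod]
    exact Measure.measurePreserving_swap
  have hemb : MeasurableEmbedding (Prod.swap : ℝ × ℝ → ℝ × ℝ) :=
    (MeasurableEquiv.prodComm : ℝ × ℝ ≃ᵐ ℝ × ℝ).measurableEmbedding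
  have h := hswap.setIntegral_preimage_emb hemb (fun p : ℝ × ℝ => p.2) Sreg
  rw [swap_Sreg] at h
  simp only [Prod.snd_swap] at h
  rw [← h]
  exact int_fst

/-- The barycenter (with respect to 2-dimensional Lebesgue measure) of the polytope
`P₁ = conv{(0,-1), (-1,0), (-1,2), (2,-1)} ⊆ ℝ²` equals `(1/12, 1/12)`: the vector-valued
integral `∫_{P₁} x dx` equals `(1/12, 1/12)` times the Lebesgue measure of `P₁`. -/
theorem barycenter_P1 (P₁ : Set (ℝ × ℝ))
    (hP₁ : P₁ = convexHull ℝ {(0, -1), (-1, 0), (-1, 2), (2, -1)}) :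
    (∫ x in P₁, x ∂volume) = (volume P₁).toReal • ((1/12, 1/12) : ℝ × ℝ) := by
  have hP : P₁ = Sreg := by rw [hP₁]; exact hull_eq
  subst hP₁
  rw [hP, vol_toReal]
  have hI : IntegrableOn (fun p : ℝ × ℝ => p) Sreg volume :=
    continuous_id.continuousOn.integrableOn_compact Sreg_compact
  have h1 : (∫ p in Sreg, p ∂volume).1 = ∫ p in Sreg, p.1 ∂volume := by
    have := (ContinuousLinearMap.fst ℝ ℝ ℝ).integral_comp_comm hI
    simpa using this.symm
  have h2 : (∫ p in Sreg, p ∂volume).2 = ∫ p in Sreg, p.2 ∂volume := by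
    have := (ContinuousLinearMap.snd ℝ ℝ ℝ).integral_comp_comm hI
    simpa using this.symm
  have : (∫ p in Sreg, p ∂volume) = ((1:ℝ)/3, (1:ℝ)/3) := by
    apply Prod.ext
    · rw [h1, int_fst]
    · rw [h2, int_snd]
  rw [this]
  simp only [Prod.smul_mk, smul_eq_mul, Prod.mk.injEq]
  norm_num
end

section
/- Let m ≥ 1 be an integer, and define F_m : ℝ → ℝ by F_m(β) = -(β·⟨(1/12,1/12),(-m-1,-m)⟩ + (1-β)·m)·4 = -((-(2m+1)/12)·β + m·(1-β))·4. Then for β ∈ [0,1], one has F_m(β) < 0 if and only if β < 12m/(14m+1); moreover 12m/(14m+1) < 6/7 for every integer m ≥ 1. -/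
/-- For an integer `m ≥ 1`, define
`F_m(β) = -(β·⟨(1/12,1/12),(-m-1,-m)⟩ + (1-β)·m)·4 = -((-(2m+1)/12)·β + m·(1-β))·4`.
For `β ∈ [0,1]`, `F_m(β) < 0` iff `β < 12m/(14m+1)`; moreover `12m/(14m+1) < 6/7`. -/
theorem log_Futaki_pluricanonical_M1 (m : ℤ) (hm : 1 ≤ m) (F : ℝ → ℝ)
    (hF : ∀ β, F β = -(β * ((1/12) * (-(m : ℝ) - 1) + (1/12) * (-(m : ℝ))) +
      (1 - β) * (m : ℝ)) * 4) :
    (∀ β, F β = -((-(2 * (m : ℝ) + 1) / 12) * β + (m : ℝ) * (1 - β)) * 4) ∧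
    (∀ β ∈ Set.Icc (0 : ℝ) 1,
      (F β < 0 ↔ β < 12 * (m : ℝ) / (14 * (m : ℝ) + 1))) ∧
    12 * (m : ℝ) / (14 * (m : ℝ) + 1) < 6/7 := by
  have hm' : (1 : ℝ) ≤ (m : ℝ) := by exact_mod_cast hm
  have hd : (0 : ℝ) < 14 * (m : ℝ) + 1 := by linarith
  refine ⟨fun β => by rw [hF β]; ring, fun β _ => ?_, ?_⟩
  · rw [hF β, lt_div_iff₀ hd]
    constructor <;> intro h <;> nlinarith
  · rw [div_lt_iff₀ hd]; linarith
end

section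
/- Let m ≥ 1 be an integer. The maximum of the linear functional p ↦ ⟨p, (-m-1,-m)⟩ (standard Euclidean inner product on ℝ²) over the finite set S'_m = { (a/m, b/m) : a,b ∈ ℤ, (a/m,b/m) ∈ P₂, a + b ≥ -m + 1 } ∪ { (0,-1) } equals m. -/
/-- For an integer `m ≥ 1`, the maximum of `p ↦ ⟨p, (-m-1,-m)⟩` over the finite set
`S'_m = { (a/m, b/m) : a,b ∈ ℤ, (a/m,b/m) ∈ P₂, a+b ≥ -m+1 } ∪ {(0,-1)}`,
where `P₂ = conv{(0,-1),(-1,0),(-1,1),(1,1),(1,-1)}`, equals `m`. -/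
theorem max_W_pluricanonical_M2 (m : ℤ) (hm : 1 ≤ m) (P₂ : Set (ℝ × ℝ))
    (hP₂ : P₂ = convexHull ℝ {(0, -1), (-1, 0), (-1, 1), (1, 1), (1, -1)})
    (S : Set (ℝ × ℝ))
    (hS : S = {p : ℝ × ℝ | ∃ a b : ℤ, p = ((a : ℝ) / m, (b : ℝ) / m) ∧ p ∈ P₂ ∧
          a + b ≥ -m + 1} ∪ {(0, -1)})
    (f : ℝ × ℝ → ℝ) (hf : ∀ p, f p = p.1 * (-(m : ℝ) - 1) + p.2 * (-(m : ℝ))) :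
    IsGreatest (f '' S) (m : ℝ) := by
  have hm0 : (0 : ℝ) < (m : ℝ) := by exact_mod_cast hm
  constructor
  · refine ⟨(0, -1), ?_, ?_⟩
    · rw [hS]; right; rfl
    · rw [hf]; simp
  · rintro y ⟨p, hp, rfl⟩
    rw [hS] at hp
    rcases hp with ⟨a, b, rfl, hpP, hab⟩ | hp
    · have hsub : P₂ ⊆ {q : ℝ × ℝ | -1 ≤ q.1} := by
        rw [hP₂]
        apply convexHull_min
        · intro x hx
          simp only [Set.mem_insert_iff, Set.mem_singleton_iff] at hx
          rcases hx with rfl | rfl | rfl | rfl | rfl <;> norm_num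
        · exact convex_halfSpace_ge (IsLinearMap.mk (fun x y => rfl) (fun c x => rfl)) (-1)
      have h1 : (-1 : ℝ) ≤ (a : ℝ) / m := hsub hpP
      have ha : -(m : ℝ) ≤ (a : ℝ) := by
        have := (le_div_iff₀ hm0).mp h1
        linarith
      have hab' : (-(m : ℝ) + 1) ≤ (a : ℝ) + (b : ℝ) := by exact_mod_cast hab
      rw [hf]
      simp only
      rw [div_mul_eq_mul_div, div_mul_eq_mul_div, ← add_div, div_le_iff₀ hm0]
      nlinarith [mul_le_mul_of_nonneg_right hab' (le_of_lt hm0)]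
    · rw [Set.mem_singleton_iff] at hp
      subst hp
      rw [hf]; simp
end

section
/- Let m ≥ 1 be an integer, and define G_m : ℝ → ℝ by G_m(β) = -(β·⟨(2/21,2/21),(-m-1,-m)⟩ + (1-β)·m)·(7/2) = -((-2(2m+1)/21)·β + m·(1-β))·(7/2). Then for β ∈ [0,1], one has G_m(β) < 0 if and only if β < 21m/(25m+2); moreover 21m/(25m+2) < 21/25 for every integer m ≥ 1. -/
/-- For an integer `m ≥ 1`, define
`G_m(β) = -(β·⟨(2/21,2/21),(-m-1,-m)⟩ + (1-β)·m)·(7/2)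
        = -((-2(2m+1)/21)·β + m·(1-β))·(7/2)`.
For `β ∈ [0,1]`, `G_m(β) < 0` iff `β < 21m/(25m+2)`; moreover `21m/(25m+2) < 21/25`. -/
theorem log_Futaki_pluricanonical_M2 (m : ℤ) (hm : 1 ≤ m) (G : ℝ → ℝ)
    (hG : ∀ β, G β = -(β * ((2/21) * (-(m : ℝ) - 1) + (2/21) * (-(m : ℝ))) +
      (1 - β) * (m : ℝ)) * (7/2)) :
    (∀ β, G β = -((-2 * (2 * (m : ℝ) + 1) / 21) * β + (m : ℝ) * (1 - β)) * (7/2)) ∧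
    (∀ β ∈ Set.Icc (0 : ℝ) 1,
      (G β < 0 ↔ β < 21 * (m : ℝ) / (25 * (m : ℝ) + 2))) ∧
    21 * (m : ℝ) / (25 * (m : ℝ) + 2) < 21/25 := by
  have hm' : (1 : ℝ) ≤ (m : ℝ) := by exact_mod_cast hm
  have hden : (0 : ℝ) < 25 * (m : ℝ) + 2 := by linarith
  refine ⟨fun β => by rw [hG]; ring, fun β _ => ?_, ?_⟩
  · rw [hG, lt_div_iff₀ hden]
    constructor <;> intro h <;> nlinarith
  · rw [div_lt_div_iff₀ hden (by norm_num)]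
    linarith
end
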